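/- arXiv:2511.12855 — 4 statements merged into one kernel-verified Lean document; each statement's English description precedes it below -/
import Mathlib

section
/- Let A be a nonzero m×n complex matrix with rank factorization PA = LU as above, and set X = U*(UU*)⁻¹(L*L)⁻¹L*P. Then AX and XA are both Hermitian. -/
open Matrix

open ComplexOrder in
lemma rank_ct_mul_self {a b : ℕ} (M : Matrix (Fin a) (Fin b) ℂ) : (Mᴴ * M).rank = M.rank :=
  Matrix.rank_conjTranspose_mul_self M

open ComplexOrder in
lemma rank_self_mul_ct {a b : ℕ} (M : Matrix (Fin a) (Fin b) ℂ) : (M * Mᴴ).rank = M.rank :=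
  Matrix.rank_self_mul_conjTranspose M

lemma isUnit_of_rank_eq (k : ℕ) (M : Matrix (Fin k) (Fin k) ℂ) (h : M.rank = k) : IsUnit M := by
  rw [← Matrix.mulVec_injective_iff_isUnit]
  rw [show (Matrix.mulVec M) = M.mulVecLin from rfl]
  have hr : LinearMap.range M.mulVecLin = ⊤ := by
    apply Submodule.eq_top_of_finrank_eq
    rw [← Matrix.rank, h]
    simp
  have hsurj : Function.Surjective M.mulVecLin := LinearMap.range_eq_top.mp hr
  exact (LinearMap.injective_iff_surjective).mpr hsurj

theorem AX_XA_hermitian (m n r : ℕ) (A : Matrix (Fin m) (Fin n) ℂ) (hA : A ≠ 0)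
    (σ : Equiv.Perm (Fin m)) (L : Matrix (Fin m) (Fin r) ℂ) (U : Matrix (Fin r) (Fin n) ℂ)
    (hL : L.rank = r) (hU : U.rank = r)
    (hfac : (Equiv.Perm.permMatrix ℂ σ) * A = L * U) :
    (A * (Uᴴ * (U * Uᴴ)⁻¹ * (Lᴴ * L)⁻¹ * Lᴴ * (Equiv.Perm.permMatrix ℂ σ)))ᴴ =
      A * (Uᴴ * (U * Uᴴ)⁻¹ * (Lᴴ * L)⁻¹ * Lᴴ * (Equiv.Perm.permMatrix ℂ σ)) ∧
    ((Uᴴ * (U * Uᴴ)⁻¹ * (Lᴴ * L)⁻¹ * Lᴴ * (Equiv.Perm.permMatrix ℂ σ)) * A)ᴴ =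
      (Uᴴ * (U * Uᴴ)⁻¹ * (Lᴴ * L)⁻¹ * Lᴴ * (Equiv.Perm.permMatrix ℂ σ)) * A := by
  set P : Matrix (Fin m) (Fin m) ℂ := Equiv.Perm.permMatrix ℂ σ with hP
  -- P is real-valued, so Pᴴ = Pᵀ
  have hPH : Pᴴ = Pᵀ := by
    ext i j
    simp [hP, Equiv.Perm.permMatrix, conjTranspose_apply, transpose_apply,
      PEquiv.toMatrix_apply, apply_ite (star : ℂ → ℂ)]
  have hPHP : Pᴴ * P = 1 := by
    rw [hPH, hP, Equiv.Perm.permMatrix, ← PEquiv.toMatrix_symm, ← Equiv.toPEquiv_symm,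
      ← PEquiv.toMatrix_trans, ← Equiv.toPEquiv_trans, Equiv.symm_trans_self,
      Equiv.toPEquiv_refl, PEquiv.toMatrix_refl]
  have hUU : IsUnit (U * Uᴴ) := by
    apply isUnit_of_rank_eq
    rw [rank_self_mul_ct, hU]
  have hLL : IsUnit (Lᴴ * L) := by
    apply isUnit_of_rank_eq
    rw [rank_ct_mul_self, hL]
  have hUUinv : (U * Uᴴ) * (U * Uᴴ)⁻¹ = 1 :=
    Matrix.mul_nonsing_inv _ ((Matrix.isUnit_iff_isUnit_det _).mp hUU)
  have hLLinv : (Lᴴ * L)⁻¹ * (Lᴴ * L) = 1 :=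
    Matrix.nonsing_inv_mul _ ((Matrix.isUnit_iff_isUnit_det _).mp hLL)
  have hAeq : A = Pᴴ * (L * U) := by
    rw [← hfac, ← Matrix.mul_assoc, hPHP, Matrix.one_mul]
  have hUUH : ((U * Uᴴ)⁻¹)ᴴ = (U * Uᴴ)⁻¹ := by
    rw [Matrix.conjTranspose_nonsing_inv, Matrix.conjTranspose_mul, Matrix.conjTranspose_conjTranspose]
  have hLLH : ((Lᴴ * L)⁻¹)ᴴ = (Lᴴ * L)⁻¹ := by
    rw [Matrix.conjTranspose_nonsing_inv, Matrix.conjTranspose_mul, Matrix.conjTranspose_conjTranspose]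
  constructor
  · have hAX : A * (Uᴴ * (U * Uᴴ)⁻¹ * (Lᴴ * L)⁻¹ * Lᴴ * P) =
        Pᴴ * (L * ((Lᴴ * L)⁻¹ * (Lᴴ * P))) := by
      rw [hAeq]
      calc Pᴴ * (L * U) * (Uᴴ * (U * Uᴴ)⁻¹ * (Lᴴ * L)⁻¹ * Lᴴ * P)
          = Pᴴ * (L * ((U * Uᴴ) * (U * Uᴴ)⁻¹ * ((Lᴴ * L)⁻¹ * (Lᴴ * P)))) := by
            simp only [Matrix.mul_assoc]
        _ = Pᴴ * (L * ((Lᴴ * L)⁻¹ * (Lᴴ * P))) := by rw [hUUinv, Matrix.one_mul]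
    rw [hAX]
    simp only [Matrix.conjTranspose_mul, Matrix.conjTranspose_conjTranspose, hLLH]
    simp only [Matrix.mul_assoc]
  · have hXA : (Uᴴ * (U * Uᴴ)⁻¹ * (Lᴴ * L)⁻¹ * Lᴴ * P) * A = Uᴴ * ((U * Uᴴ)⁻¹ * U) := by
      calc (Uᴴ * (U * Uᴴ)⁻¹ * (Lᴴ * L)⁻¹ * Lᴴ * P) * A
          = Uᴴ * ((U * Uᴴ)⁻¹ * ((Lᴴ * L)⁻¹ * (Lᴴ * (P * A)))) := by
            simp only [Matrix.mul_assoc]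
        _ = Uᴴ * ((U * Uᴴ)⁻¹ * ((Lᴴ * L)⁻¹ * (Lᴴ * L) * U)) := by
            rw [hfac]; simp only [Matrix.mul_assoc]
        _ = Uᴴ * ((U * Uᴴ)⁻¹ * U) := by rw [hLLinv, Matrix.one_mul]
    rw [hXA]
    simp only [Matrix.conjTranspose_mul, Matrix.conjTranspose_conjTranspose, hUUH]
    simp only [Matrix.mul_assoc]
end

section
/- Let x, y be real vectors of length n and u the unit roundoff with nu < 1. Suppose ν̂ is a floating-point computed value of xᵀy satisfying |ν̂ − xᵀy| ≤ nu·|x|ᵀ|y|, and ν_a is a computed value of |x|ᵀ|y| satisfying |ν_a − |x|ᵀ|y|| ≤ nu·|x|ᵀ|y|. If |ν̂| > (nu/(1−nu))·ν_a, then the exact value xᵀy is nonzero. -/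
theorem dot_product_nonzero_of_fp_test (n : ℕ) (x y : Fin n → ℝ) (u : ℝ)
    (hu : 0 < u) (hnu : (n : ℝ) * u < 1) (ν νa : ℝ)
    (hν : |ν - (∑ i, x i * y i)| ≤ (n : ℝ) * u * (∑ i, |x i| * |y i|))
    (hνa : |νa - (∑ i, |x i| * |y i|)| ≤ (n : ℝ) * u * (∑ i, |x i| * |y i|))
    (h : ((n : ℝ) * u / (1 - (n : ℝ) * u)) * νa < |ν|) :
    (∑ i, x i * y i) ≠ 0 := by
  intro hs
  set a := (∑ i, |x i| * |y i|) with ha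
  have hnu0 : 0 ≤ (n : ℝ) * u := by positivity
  have h1 : 0 < 1 - (n : ℝ) * u := by linarith
  have hν' : |ν| ≤ (n : ℝ) * u * a := by
    simpa [hs] using hν
  have hνa' : (1 - (n : ℝ) * u) * a ≤ νa := by
    have := abs_le.mp hνa
    nlinarith [this.1, this.2]
  have key : (n : ℝ) * u * a ≤ ((n : ℝ) * u / (1 - (n : ℝ) * u)) * νa := by
    rw [div_mul_eq_mul_div, le_div_iff₀ h1]
    nlinarith
  linarith
end

section
/- Let x, y be complex vectors of length n with real and imaginary part vectors x_R, x_I, y_R, y_I, and let u > 0 with 2nu < 1. Suppose ν̂ is a complex number with |Re(ν̂ − x*y)| ≤ 2nu·((|x_R|,|x_I|)ᵀ(|y_R|,|y_I|)) and ν̃_R ≥ 0 satisfies |ν̃_R − (|x_R|,|x_I|)ᵀ(|y_R|,|y_I|)| ≤ 2nu·(|x_R|,|x_I|)ᵀ(|y_R|,|y_I|). If |Re ν̂| > (2nu/(1−2nu))·ν̃_R, then x*y ≠ 0. -/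
theorem complex_dot_product_nonzero_of_fp_test (n : ℕ) (x y : Fin n → ℂ) (u : ℝ)
    (hu : 0 < u) (hnu : 2 * (n : ℝ) * u < 1) (ν : ℂ) (νR : ℝ) (hνR : 0 ≤ νR)
    (hre : |(ν - ∑ i, (starRingEnd ℂ) (x i) * y i).re| ≤
      2 * (n : ℝ) * u * (∑ i, (|(x i).re| * |(y i).re| + |(x i).im| * |(y i).im|)))
    (hR : |νR - (∑ i, (|(x i).re| * |(y i).re| + |(x i).im| * |(y i).im|))| ≤
      2 * (n : ℝ) * u * (∑ i, (|(x i).re| * |(y i).re| + |(x i).im| * |(y i).im|)))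
    (h : (2 * (n : ℝ) * u / (1 - 2 * (n : ℝ) * u)) * νR < |ν.re|) :
    (∑ i, (starRingEnd ℂ) (x i) * y i) ≠ 0 := by
  intro h0
  set ε : ℝ := 2 * (n : ℝ) * u with hε
  set s : ℝ := ∑ i, (|(x i).re| * |(y i).re| + |(x i).im| * |(y i).im|) with hs
  have hεpos : 0 ≤ ε := by positivity
  have h1ε : 0 < 1 - ε := by linarith
  rw [h0] at hre
  simp only [sub_zero] at hre
  have hre' : |ν.re| ≤ ε * s := hre
  have habs := abs_le.mp hR
  have hsle : s ≤ νR / (1 - ε) := by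
    rw [le_div_iff₀ h1ε]; nlinarith [habs.1]
  have : |ν.re| ≤ ε / (1 - ε) * νR := by
    calc |ν.re| ≤ ε * s := hre'
    _ ≤ ε * (νR / (1 - ε)) := by nlinarith
    _ = ε / (1 - ε) * νR := by ring
  linarith
end

section
/- Let A be a nonzero m×n complex matrix with rank factorization PA = LU as above and B any m×p complex matrix. Then AA⁺B = P*L(L*L)⁻¹L*PB. -/
/-!
Write `A = MU` with `M = PᴴL`; as `P` is unitary, `MᴴM = LᴴL`. Both `AX` and
`Q = M (MᴴM)⁻¹ Mᴴ` are Hermitian. Since `UUᴴ` is invertible, `M = A Uᴴ (UUᴴ)⁻¹`, so `AXA = A`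
gives `AX·Q = Q`; and `QM = M` gives `Q·AX = AX`. Taking adjoints, `AX = (Q·AX)ᴴ = AX·Q = Q`.
-/

open Matrix
open scoped ComplexOrder

theorem IsSelfAdjoint.eq_of_mul_eq_of_mul_eq {R : Type*} [Monoid R] [StarMul R] {e q : R}
    (he : IsSelfAdjoint e) (hq : IsSelfAdjoint q) (heq : e * q = q) (hqe : q * e = e) :
    e = q := by
  rw [← heq, ← he.star_eq, ← hq.star_eq, ← star_mul, hqe]

namespace Matrix

theorem permMatrix_mem_unitary {n R : Type*} [Fintype n] [DecidableEq n] [CommRing R]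
    [StarRing R] (σ : Equiv.Perm n) : σ.permMatrix R ∈ unitary (Matrix n n R) := by
  simp [Unitary.mem_iff, star_eq_conjTranspose, ← permMatrix_mul]

theorem isUnit_of_rank_eq_card {K n : Type*} [Field K] [Fintype n] [DecidableEq n]
    {M : Matrix n n K} (h : M.rank = Fintype.card n) : IsUnit M := by
  rw [← linearIndependent_cols_iff_isUnit, linearIndependent_iff_card_eq_finrank_span,
    Set.finrank, ← rank_eq_finrank_span_cols, h]

section StarOrderedField

variable {K m n r : Type*} [Field K] [PartialOrder K] [StarRing K] [StarOrderedRing K]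
  [Fintype m] [Fintype n] [Fintype r] [DecidableEq r]

theorem isUnit_conjTranspose_mul_self_of_rank_eq {L : Matrix m r K}
    (hL : L.rank = Fintype.card r) : IsUnit (Lᴴ * L) :=
  isUnit_of_rank_eq_card (by rw [rank_conjTranspose_mul_self, hL])

theorem isUnit_self_mul_conjTranspose_of_rank_eq {U : Matrix r n K}
    (hU : U.rank = Fintype.card r) : IsUnit (U * Uᴴ) :=
  isUnit_of_rank_eq_card (by rw [rank_self_mul_conjTranspose, hU])

end StarOrderedField

section FullRankFactorization

variable {R m n r : Type*} [CommRing R] [StarRing R] [Fintype m] [Fintype n] [Fintype r]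
  [DecidableEq r] {M : Matrix m r R}

theorem isSelfAdjoint_mul_inv_conjTranspose_mul_self_mul_conjTranspose :
    IsSelfAdjoint (M * (Mᴴ * M)⁻¹ * Mᴴ) := by
  simp only [IsSelfAdjoint, star_eq_conjTranspose, conjTranspose_mul, conjTranspose_nonsing_inv,
    conjTranspose_conjTranspose, Matrix.mul_assoc]

theorem mul_inv_conjTranspose_mul_self_mul_conjTranspose_mul (hM : IsUnit (Mᴴ * M)) :
    M * (Mᴴ * M)⁻¹ * Mᴴ * M = M := by
  rw [Matrix.mul_assoc (M * _), nonsing_inv_mul_cancel_right _ _ ((isUnit_iff_isUnit_det _).mp hM)]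

theorem mul_eq_of_full_rank_factorization [DecidableEq m] {A : Matrix m n R}
    {X : Matrix n m R} {U : Matrix r n R} (hA : A = M * U) (hM : IsUnit (Mᴴ * M))
    (hU : IsUnit (U * Uᴴ)) (hAXA : A * X * A = A) (hAX : (A * X)ᴴ = A * X) :
    A * X = M * (Mᴴ * M)⁻¹ * Mᴴ := by
  have hM_eq : M = A * (Uᴴ * (U * Uᴴ)⁻¹) := by
    rw [hA, Matrix.mul_assoc, ← Matrix.mul_assoc U,
      mul_nonsing_inv _ ((isUnit_iff_isUnit_det _).mp hU), Matrix.mul_one]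
  have hAXM : A * X * M = M := by
    rw [hM_eq, ← Matrix.mul_assoc, hAXA]
  have hQA : M * (Mᴴ * M)⁻¹ * Mᴴ * A = A := by
    rw [hA, ← Matrix.mul_assoc, mul_inv_conjTranspose_mul_self_mul_conjTranspose_mul hM]
  refine IsSelfAdjoint.eq_of_mul_eq_of_mul_eq hAX
    isSelfAdjoint_mul_inv_conjTranspose_mul_self_mul_conjTranspose ?_ ?_
  · simp only [← Matrix.mul_assoc, hAXM]
  · rw [← Matrix.mul_assoc, hQA]

end FullRankFactorization

end Matrix

theorem AAplusB_eq_general (m n r p : ℕ) (A : Matrix (Fin m) (Fin n) ℂ)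
    (σ : Equiv.Perm (Fin m)) (L : Matrix (Fin m) (Fin r) ℂ) (U : Matrix (Fin r) (Fin n) ℂ)
    (hL : L.rank = r) (hU : U.rank = r)
    (hfac : (Equiv.Perm.permMatrix ℂ σ) * A = L * U)
    (X : Matrix (Fin n) (Fin m) ℂ)
    (h1 : A * X * A = A)
    (h3 : (A * X)ᴴ = A * X)
    (B : Matrix (Fin m) (Fin p) ℂ) :
    A * X * B = (Equiv.Perm.permMatrix ℂ σ)ᴴ * L * (Lᴴ * L)⁻¹ * Lᴴ *
      (Equiv.Perm.permMatrix ℂ σ) * B := by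
  set P := σ.permMatrix ℂ
  have hP := permMatrix_mem_unitary (R := ℂ) σ
  have hPstarP : Pᴴ * P = 1 := Unitary.star_mul_self_of_mem hP
  have hPPstar : P * Pᴴ = 1 := Unitary.mul_star_self_of_mem hP
  have hA : A = (Pᴴ * L) * U := by
    rw [Matrix.mul_assoc, ← hfac, ← Matrix.mul_assoc, hPstarP, Matrix.one_mul]
  have hgram : (Pᴴ * L)ᴴ * (Pᴴ * L) = Lᴴ * L := by
    rw [conjTranspose_mul, conjTranspose_conjTranspose, Matrix.mul_assoc, ← Matrix.mul_assoc P,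
      hPPstar, Matrix.one_mul]
  have hLL : IsUnit (Lᴴ * L) :=
    isUnit_conjTranspose_mul_self_of_rank_eq (hL.trans (Fintype.card_fin r).symm)
  have hUU : IsUnit (U * Uᴴ) :=
    isUnit_self_mul_conjTranspose_of_rank_eq (hU.trans (Fintype.card_fin r).symm)
  rw [mul_eq_of_full_rank_factorization hA (hgram ▸ hLL) hUU h1 h3, hgram, conjTranspose_mul,
    conjTranspose_conjTranspose]
  simp only [Matrix.mul_assoc]

theorem AAplusB_eq (m n r p : ℕ) (A : Matrix (Fin m) (Fin n) ℂ) (hA : A ≠ 0)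
    (σ : Equiv.Perm (Fin m)) (L : Matrix (Fin m) (Fin r) ℂ) (U : Matrix (Fin r) (Fin n) ℂ)
    (hL : L.rank = r) (hU : U.rank = r)
    (hfac : (Equiv.Perm.permMatrix ℂ σ) * A = L * U)
    (X : Matrix (Fin n) (Fin m) ℂ)
    (h1 : A * X * A = A) (h2 : X * A * X = X)
    (h3 : (A * X)ᴴ = A * X) (h4 : (X * A)ᴴ = X * A)
    (B : Matrix (Fin m) (Fin p) ℂ) :
    A * X * B = (Equiv.Perm.permMatrix ℂ σ)ᴴ * L * (Lᴴ * L)⁻¹ * Lᴴ *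
      (Equiv.Perm.permMatrix ℂ σ) * B :=
  AAplusB_eq_general m n r p A σ L U hL hU hfac X h1 h3 B
end
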